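/- arXiv:1702.05168 — 3 statements merged into one kernel-verified Lean document; each statement's English description precedes it below -/
import Mathlib

section
/- Let p, q ∈ (0,1) with p > q. Then for all sufficiently large n there exists a monotone coupling γ of the product measures Bernoulli(p)^n and Bernoulli(q)^n on {0,1}^n such that γ(100…0, 00…0) = p(1−p)^{n−1} and γ(010…0, 00…0) = p(1−p)^{n−1}; that is, the sequences 100^{n−2} and 010^{n−2} are coupled with the all-zero sequence with their full Bernoulli(p)^n-probability. -/
/-!
Let `γ₀` be the coordinatewise product of the monotone one-bit coupling that keeps a `1` with
probability `q / p`. Under `γ₀` the string `eⱼ = Pi.single j 1` is coupled only with `0` and with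
itself, the latter with mass `δ = q (1-p)^(n-1)`; move that mass to `(eⱼ, 0)`, for `j = 0, 1`.
This unbalances the second marginal (`+2δ` at `0`, `-δ` at `e₀` and `e₁`), which is repaired by
moving mass from `(x, 0)` to `(x, eⱼ)` for the strings with `x₀ = x₁ = 1`, proportionally to
`γ₀(x, 0)`. These carry total mass `(p-q)² (1-q)^(n-2)`, which exceeds `2δ` for large `n` since
`1 - p < 1 - q`; so no mass becomes negative, and monotonicity survives because such `x`
dominate `e₀` and `e₁`.
-/

open Finset Filter Asymptotics

namespace BernoulliCoupling

lemma single_one_le_iff {ι : Type*} [DecidableEq ι] {j : ι} {x : ι → Fin 2} :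
    Pi.single j 1 ≤ x ↔ x j = 1 := by
  refine ⟨fun h => ?_, fun h i => ?_⟩
  · have := h j
    simp only [Pi.single_eq_same] at this
    omega
  · rcases eq_or_ne i j with rfl | hij
    · simp [h]
    · simp [hij]

lemma single_one_injective {ι : Type*} [DecidableEq ι] :
    Function.Injective fun j : ι => (Pi.single j 1 : ι → Fin 2) := fun j k h => by
  simpa [Pi.single_apply] using congrFun h j

lemma prod_ite_mem_const {ι : Type*} [Fintype ι] [DecidableEq ι] (s : Finset ι) (c d : ℝ) :
    ∏ i, (if i ∈ s then c else d) = c ^ #s * d ^ (Fintype.card ι - #s) := by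
  rw [prod_ite, filter_mem_eq_inter, univ_inter, prod_const, prod_const, filter_not,
    filter_mem_eq_inter, univ_inter, card_sdiff_of_subset (subset_univ s), card_univ]

lemma single_eq_ite_val {n : ℕ} (m : ℕ) (hm : m < n) :
    (Pi.single ⟨m, hm⟩ 1 : Fin n → Fin 2) = fun i : Fin n => if (i : ℕ) = m then 1 else 0 := by
  funext i
  simp [Pi.single_apply, Fin.ext_iff]

variable {ι : Type*} [Fintype ι] (p q : ℝ)

/-- Rows are indexed by the Bernoulli(`p`) bit, columns by the Bernoulli(`q`) bit. -/
def bitCoupling : Fin 2 → Fin 2 → ℝ := ![![1 - p, 0], ![p - q, q]]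

lemma sum_bitCoupling_right (a : Fin 2) :
    ∑ b, bitCoupling p q a b = if a = 1 then p else 1 - p := by
  fin_cases a <;> simp [bitCoupling]

lemma sum_bitCoupling_left (b : Fin 2) :
    ∑ a, bitCoupling p q a b = if b = 1 then q else 1 - q := by
  fin_cases b <;> simp [bitCoupling]

def productCoupling (x y : ι → Fin 2) : ℝ := ∏ i, bitCoupling p q (x i) (y i)

variable {p q}

lemma bitCoupling_nonneg (hq : 0 ≤ q) (hqp : q ≤ p) (hp : p ≤ 1) (a b : Fin 2) :
    0 ≤ bitCoupling p q a b := by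
  fin_cases a <;> fin_cases b <;> simp [bitCoupling] <;> linarith

lemma bitCoupling_eq_zero_of_lt {a b : Fin 2} (h : a < b) : bitCoupling p q a b = 0 := by
  fin_cases a <;> fin_cases b <;> simp_all [bitCoupling]

lemma productCoupling_nonneg (hq : 0 ≤ q) (hqp : q ≤ p) (hp : p ≤ 1) (x y : ι → Fin 2) :
    0 ≤ productCoupling p q x y :=
  prod_nonneg fun _ _ => bitCoupling_nonneg hq hqp hp _ _

lemma productCoupling_eq_zero_of_not_le {x y : ι → Fin 2} (h : ¬ y ≤ x) :
    productCoupling p q x y = 0 := by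
  obtain ⟨i, hi⟩ := not_forall.mp h
  exact prod_eq_zero (mem_univ i) (bitCoupling_eq_zero_of_lt (not_le.mp hi))

variable [DecidableEq ι] (p q)

lemma sum_productCoupling_right (x : ι → Fin 2) :
    ∑ y, productCoupling p q x y = ∏ i, if x i = 1 then p else 1 - p := by
  simp only [productCoupling, ← Fintype.prod_sum, sum_bitCoupling_right]

lemma sum_productCoupling_left (y : ι → Fin 2) :
    ∑ x, productCoupling p q x y = ∏ i, if y i = 1 then q else 1 - q := by
  simp only [productCoupling, ← Fintype.prod_sum (fun i a => bitCoupling p q a (y i)),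
    sum_bitCoupling_left]

lemma productCoupling_single_single (j : ι) (a b : Fin 2) :
    productCoupling p q (Pi.single j a) (Pi.single j b)
      = bitCoupling p q a b * (1 - p) ^ (Fintype.card ι - 1) := by
  have h : ∀ i, bitCoupling p q ((Pi.single j a : ι → Fin 2) i) ((Pi.single j b : ι → Fin 2) i)
      = if i ∈ ({j} : Finset ι) then bitCoupling p q a b else 1 - p := by
    intro i
    rcases eq_or_ne i j with rfl | hij
    · simp
    · simp [hij, bitCoupling]
  simp only [productCoupling, h, prod_ite_mem_const, card_singleton, pow_one]

lemma productCoupling_single_one_self (i : ι) :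
    productCoupling p q (Pi.single i 1) (Pi.single i 1) = q * (1 - p) ^ (Fintype.card ι - 1) := by
  simp [productCoupling_single_single, bitCoupling]

/-- `productCoupling p q x 0` restricted to the strings with `x j = x k = 1`. -/
def donorWeight (j k : ι) (x : ι → Fin 2) : ℝ :=
  ∏ i, if i ∈ ({j, k} : Finset ι) then (if x i = 1 then p - q else 0)
    else bitCoupling p q (x i) 0

lemma sum_donorWeight_eq_prod (j k : ι) :
    ∑ x, donorWeight p q j k x = ∏ i, if i ∈ ({j, k} : Finset ι) then p - q else 1 - q := by
  simp only [donorWeight]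
  rw [← Fintype.prod_sum fun i b => if i ∈ ({j, k} : Finset ι) then (if b = 1 then p - q else 0)
    else bitCoupling p q b 0]
  refine prod_congr rfl fun i _ => ?_
  split_ifs <;> simp [bitCoupling]

lemma sum_donorWeight {j k : ι} (hjk : j ≠ k) :
    ∑ x, donorWeight p q j k x = (p - q) ^ 2 * (1 - q) ^ (Fintype.card ι - 2) := by
  rw [sum_donorWeight_eq_prod, prod_ite_mem_const, card_pair hjk]

variable {p q} {j k : ι}

lemma sum_donorWeight_pos (hqp : q < p) (hq : q < 1) : 0 < ∑ x, donorWeight p q j k x := by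
  rw [sum_donorWeight_eq_prod]
  exact prod_pos fun i _ => by split_ifs <;> linarith

lemma donorWeight_nonneg (hq : 0 ≤ q) (hqp : q ≤ p) (hp : p ≤ 1) (x : ι → Fin 2) :
    0 ≤ donorWeight p q j k x :=
  prod_nonneg fun i _ => by
    split_ifs
    exacts [by linarith, le_rfl, bitCoupling_nonneg hq hqp hp _ _]

lemma donorWeight_le_productCoupling (hq : 0 ≤ q) (hqp : q ≤ p) (hp : p ≤ 1)
    (x : ι → Fin 2) : donorWeight p q j k x ≤ productCoupling p q x 0 := by
  refine prod_le_prod (fun i _ => ?_) fun i _ => ?_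
  · split_ifs
    exacts [by linarith, le_rfl, bitCoupling_nonneg hq hqp hp _ _]
  · split_ifs with _ h
    · simp [h, bitCoupling]
    · exact bitCoupling_nonneg hq hqp hp _ _
    · rfl

lemma single_le_of_donorWeight_ne_zero {x : ι → Fin 2} (h : donorWeight p q j k x ≠ 0) :
    Pi.single j 1 ≤ x ∧ Pi.single k 1 ≤ x := by
  rw [donorWeight, prod_ne_zero_iff] at h
  have hx : ∀ i ∈ ({j, k} : Finset ι), x i = 1 := fun i hi => by
    by_contra hxi
    simpa [hi, hxi] using h i (mem_univ i)
  simp [single_one_le_iff, hx]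

lemma donorWeight_single_one (hjk : j ≠ k) : donorWeight p q j k (Pi.single j 1) = 0 := by
  by_contra h
  simpa [single_one_le_iff, hjk.symm] using (single_le_of_donorWeight_ne_zero h).2

lemma donorWeight_comm (j k : ι) : donorWeight p q j k = donorWeight p q k j := by
  funext x
  rw [donorWeight, donorWeight, pair_comm]

variable (p q j k)

/-- A rank-one correction with zero row and column sums: the mass `productCoupling p q e e` goes
from `(e, e)` to `(e, 0)` and, spread along `donorWeight`, from column `0` back to column `e`. -/
noncomputable def reroute (e x y : ι → Fin 2) : ℝ :=
  productCoupling p q e e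
    * ((if x = e then 1 else 0) - donorWeight p q j k x / ∑ x', donorWeight p q j k x')
    * ((if y = 0 then 1 else 0) - if y = e then 1 else 0)

lemma sum_reroute_right (e x : ι → Fin 2) : ∑ y, reroute p q j k e x y = 0 := by
  simp only [reroute, ← mul_sum, sum_sub_distrib, sum_ite_eq', mem_univ, if_true, sub_self,
    mul_zero]

variable {p q j k}

lemma sum_reroute_left (hM : ∑ x, donorWeight p q j k x ≠ 0) (e y : ι → Fin 2) :
    ∑ x, reroute p q j k e x y = 0 := by
  simp only [reroute, ← sum_mul, ← mul_sum, sum_sub_distrib, sum_ite_eq', mem_univ, if_true,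
    ← sum_div, div_self hM, sub_self, mul_zero, zero_mul]

lemma reroute_eq_zero_of_ne {e y : ι → Fin 2} (hy0 : y ≠ 0) (hye : y ≠ e) (x : ι → Fin 2) :
    reroute p q j k e x y = 0 := by
  simp [reroute, hy0, hye]

lemma reroute_eq_zero_of_not_le {e x y : ι → Fin 2}
    (he : ∀ x, donorWeight p q j k x ≠ 0 → e ≤ x) (h : ¬ y ≤ x) : reroute p q j k e x y = 0 := by
  have hy : y ≠ 0 := by rintro rfl; exact h fun i => Fin.zero_le _
  rcases eq_or_ne y e with rfl | hye
  · have hx : x ≠ y := by rintro rfl; exact h le_rfl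
    have hw : donorWeight p q j k x = 0 := by by_contra hw; exact h (he x hw)
    simp [reroute, hx, hw]
  · simp [reroute, hy, hye]

lemma neg_le_reroute_zero (hq : 0 ≤ q) (hqp : q ≤ p) (hp : p ≤ 1) {e : ι → Fin 2} (he : e ≠ 0)
    (x : ι → Fin 2) :
    -(productCoupling p q e e * (donorWeight p q j k x / ∑ x', donorWeight p q j k x'))
      ≤ reroute p q j k e x 0 := by
  have hδ := productCoupling_nonneg hq hqp hp e e
  simp only [reroute, if_true, he.symm, if_false, sub_zero, mul_one]
  split_ifs <;> nlinarith

lemma productCoupling_add_reroute_self_nonneg (hq : 0 ≤ q) (hqp : q < p) (hp : p ≤ 1)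
    {e : ι → Fin 2} (he : e ≠ 0) (x : ι → Fin 2) :
    0 ≤ productCoupling p q x e + reroute p q j k e x e := by
  have hM := sum_donorWeight_pos (j := j) (k := k) hqp (by linarith)
  have hw := donorWeight_nonneg (j := j) (k := k) hq hqp.le hp x
  have hδ := productCoupling_nonneg hq hqp.le hp e e
  have h0 := productCoupling_nonneg hq hqp.le hp x e
  simp only [reroute, if_true, he, if_false, zero_sub, mul_neg_one]
  split_ifs with hx
  · subst hx
    ring_nf
    positivity
  · have : 0 ≤ productCoupling p q e e * (donorWeight p q j k x / ∑ x', donorWeight p q j k x') :=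
      by positivity
    linarith

variable (p q j k) in
noncomputable def coupling (x y : ι → Fin 2) : ℝ :=
  productCoupling p q x y + reroute p q j k (Pi.single j 1) x y
    + reroute p q j k (Pi.single k 1) x y

lemma sum_coupling_right (x : ι → Fin 2) :
    ∑ y, coupling p q j k x y = ∏ i, if x i = 1 then p else 1 - p := by
  simp only [coupling, sum_add_distrib, sum_reroute_right, sum_productCoupling_right, add_zero]

lemma sum_coupling_left (hM : ∑ x, donorWeight p q j k x ≠ 0) (y : ι → Fin 2) :
    ∑ x, coupling p q j k x y = ∏ i, if y i = 1 then q else 1 - q := by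
  simp only [coupling, sum_add_distrib, sum_reroute_left hM, sum_productCoupling_left, add_zero]

lemma sum_coupling : ∑ z : (ι → Fin 2) × (ι → Fin 2), coupling p q j k z.1 z.2 = 1 := by
  rw [Fintype.sum_prod_type]
  simp only [sum_coupling_right]
  rw [← Fintype.prod_sum fun _ b => if b = 1 then p else 1 - p]
  simp

lemma le_of_coupling_ne_zero {x y : ι → Fin 2} (h : coupling p q j k x y ≠ 0) : y ≤ x := by
  by_contra hyx
  refine h ?_
  rw [coupling, productCoupling_eq_zero_of_not_le hyx,
    reroute_eq_zero_of_not_le (fun x hx => (single_le_of_donorWeight_ne_zero hx).1) hyx,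
    reroute_eq_zero_of_not_le (fun x hx => (single_le_of_donorWeight_ne_zero hx).2) hyx]
  simp

lemma coupling_nonneg (hq : 0 ≤ q) (hqp : q < p) (hp : p ≤ 1) (hjk : j ≠ k)
    (hmass : 2 * (q * (1 - p) ^ (Fintype.card ι - 1))
      ≤ (p - q) ^ 2 * (1 - q) ^ (Fintype.card ι - 2)) (x y : ι → Fin 2) :
    0 ≤ coupling p q j k x y := by
  have hj0 : (Pi.single j 1 : ι → Fin 2) ≠ 0 := by simp
  have hk0 : (Pi.single k 1 : ι → Fin 2) ≠ 0 := by simp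
  have hjk' := single_one_injective.ne hjk
  rw [coupling]
  by_cases hy0 : y = 0
  · subst hy0
    rw [← sum_donorWeight p q hjk] at hmass
    set M := ∑ x', donorWeight p q j k x'
    have hM : 0 < M := sum_donorWeight_pos hqp (by linarith)
    have hw := donorWeight_nonneg (j := j) (k := k) hq hqp.le hp x
    have hmass' : 2 * (q * (1 - p) ^ (Fintype.card ι - 1)) * (donorWeight p q j k x / M)
        ≤ productCoupling p q x 0 :=
      calc _ ≤ M * (donorWeight p q j k x / M) := by gcongr
        _ = donorWeight p q j k x := mul_div_cancel₀ _ hM.ne'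
        _ ≤ _ := donorWeight_le_productCoupling hq hqp.le hp x
    have hj := neg_le_reroute_zero (j := j) (k := k) hq hqp.le hp hj0 x
    have hk := neg_le_reroute_zero (j := j) (k := k) hq hqp.le hp hk0 x
    rw [productCoupling_single_one_self] at hj hk
    linarith
  by_cases hyj : y = Pi.single j 1
  · subst hyj
    rw [reroute_eq_zero_of_ne hy0 hjk', add_zero]
    exact productCoupling_add_reroute_self_nonneg hq hqp hp hj0 x
  by_cases hyk : y = Pi.single k 1
  · subst hyk
    rw [reroute_eq_zero_of_ne hy0 hjk'.symm, add_zero]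
    exact productCoupling_add_reroute_self_nonneg hq hqp hp hk0 x
  rw [reroute_eq_zero_of_ne hy0 hyj, reroute_eq_zero_of_ne hy0 hyk, add_zero, add_zero]
  exact productCoupling_nonneg hq hqp.le hp x y

lemma coupling_single_one_zero (hjk : j ≠ k) :
    coupling p q j k (Pi.single j 1) 0 = p * (1 - p) ^ (Fintype.card ι - 1) := by
  have hjk' := single_one_injective.ne hjk
  have h0 : productCoupling p q (Pi.single j 1) 0 = (p - q) * (1 - p) ^ (Fintype.card ι - 1) := by
    simpa [bitCoupling] using productCoupling_single_single p q j 1 0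
  simp only [coupling, reroute, donorWeight_single_one hjk, h0, productCoupling_single_one_self]
  simp [hjk', (Pi.single_ne_zero_iff.mpr one_ne_zero).symm]
  ring

lemma coupling_comm (j k : ι) : coupling p q j k = coupling p q k j := by
  funext x y
  rw [coupling, coupling, reroute, reroute, reroute, reroute, donorWeight_comm j k]
  ring

lemma eventually_two_mul_pow_succ_le (hq : 0 < q) (hqp : q < p) (hp : p < 1) :
    ∀ᶠ m : ℕ in atTop, 2 * (q * (1 - p) ^ (m + 1)) ≤ (p - q) ^ 2 * (1 - q) ^ m := by
  have hp' : 0 < 1 - p := by linarith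
  have hqp' : 0 < p - q := by linarith
  have hc : 0 < (p - q) ^ 2 / (2 * q * (1 - p)) := by positivity
  filter_upwards [(isLittleO_pow_pow_of_lt_left hp'.le (by linarith : 1 - p < 1 - q)).def hc]
    with m hm
  rw [Real.norm_of_nonneg (pow_nonneg hp'.le m),
    Real.norm_of_nonneg (pow_nonneg (by linarith) m)] at hm
  calc 2 * (q * (1 - p) ^ (m + 1)) = 2 * q * (1 - p) * (1 - p) ^ m := by ring
    _ ≤ 2 * q * (1 - p) * ((p - q) ^ 2 / (2 * q * (1 - p)) * (1 - q) ^ m) := by gcongr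
    _ = (p - q) ^ 2 * (1 - q) ^ m := by field_simp

end BernoulliCoupling

open BernoulliCoupling

/-- Key coupling, Lemma 2.2: for all sufficiently large `n` there is a
monotone coupling `γ` of Bernoulli(p)^n and Bernoulli(q)^n on `Fin n → Fin 2` that
couples each of the two special strings `100…0` and `010…0` with the all-zero string
with their full Bernoulli(p)^n-probability `p(1-p)^(n-1)`. Measures on the finite
space are represented as real-valued mass functions. -/
theorem stmt1 (p q : ℝ) (hp : p ∈ Set.Ioo (0:ℝ) 1) (hq : q ∈ Set.Ioo (0:ℝ) 1)
    (hpq : q < p) :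
    ∃ N : ℕ, ∀ n ≥ N,
      ∃ γ : (Fin n → Fin 2) × (Fin n → Fin 2) → ℝ,
        (∀ z, 0 ≤ γ z) ∧ (∑ z : (Fin n → Fin 2) × (Fin n → Fin 2), γ z = 1) ∧
        (∀ x : Fin n → Fin 2,
          ∑ y : Fin n → Fin 2, γ (x, y)
            = ∏ i : Fin n, (if x i = 1 then p else 1 - p)) ∧
        (∀ y : Fin n → Fin 2,
          ∑ x : Fin n → Fin 2, γ (x, y)
            = ∏ i : Fin n, (if y i = 1 then q else 1 - q)) ∧
        (∀ x y : Fin n → Fin 2, γ (x, y) ≠ 0 → ∀ i, y i ≤ x i) ∧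
        γ (fun i => if (i : ℕ) = 0 then 1 else 0, fun _ => 0) = p * (1 - p) ^ (n - 1) ∧
        γ (fun i => if (i : ℕ) = 1 then 1 else 0, fun _ => 0) = p * (1 - p) ^ (n - 1) := by
  obtain ⟨N, hN⟩ := eventually_atTop.mp (eventually_two_mul_pow_succ_le hq.1 hpq hp.2)
  refine ⟨N + 2, fun n hn => ?_⟩
  obtain ⟨m, rfl⟩ : ∃ m, n = m + 2 := ⟨n - 2, by omega⟩
  have hmass := hN m (by omega)
  set j : Fin (m + 2) := ⟨0, by omega⟩
  set k : Fin (m + 2) := ⟨1, by omega⟩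
  have hjk : j ≠ k := by simp [j, k]
  rw [← single_eq_ite_val 0 (by omega), ← single_eq_ite_val 1 (by omega)]
  refine ⟨fun z => coupling p q j k z.1 z.2,
    fun z => coupling_nonneg hq.1.le hpq hp.2.le hjk (by simpa using hmass) z.1 z.2,
    sum_coupling, sum_coupling_right,
    sum_coupling_left (sum_donorWeight_pos hpq hq.2).ne',
    fun x y h => le_of_coupling_ne_zero h, ?_, ?_⟩
  · have h := coupling_single_one_zero (p := p) (q := q) hjk
    rw [Fintype.card_fin] at h
    exact h
  · have h := coupling_single_one_zero (p := p) (q := q) hjk.symm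
    rw [Fintype.card_fin, coupling_comm] at h
    exact h
end

section
/- Let κ and ι be probability measures on a finite totally ordered set [N] = {0,…,N−1}. Then κ stochastically dominates ι (i.e., Σ_{i≤j} κ(i) ≤ Σ_{i≤j} ι(i) for all j) if and only if there exists a coupling γ of κ and ι supported on pairs (a,b) with b ≤ a. -/
/-!
Write `K` and `I` for the cumulative distribution functions of `κ` and `ι`, so that atom `a`
of `κ` occupies the interval `[K a, K (a + 1)]` of `[0, 1]` and atom `b` of `ι` the interval
`[I b, I (b + 1)]`. Drawing `U` uniformly from `[0, 1]` and reading off the atoms of `κ` and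
`ι` containing it couples the two measures, with `γ (a, b)` the length of the overlap of the two
intervals. Domination `K ≤ I` means that the `ι`-intervals lie to the left of the `κ`-intervals
of the same index, so overlaps with `a < b` are empty. Conversely, a coupling supported on
`b ≤ a` carries the mass `κ` puts on `Iic j` to points of `Iic j` under `ι`.
-/

open Finset

def intervalOverlap (x y u v : ℝ) : ℝ := max 0 (min y v - max x u)

lemma intervalOverlap_nonneg (x y u v : ℝ) : 0 ≤ intervalOverlap x y u v := le_max_left _ _

lemma intervalOverlap_comm (x y u v : ℝ) : intervalOverlap x y u v = intervalOverlap u v x y := by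
  rw [intervalOverlap, intervalOverlap, min_comm y, max_comm x]

lemma intervalOverlap_eq_zero_of_le {x y u v : ℝ} (h : y ≤ u) : intervalOverlap x y u v = 0 :=
  max_eq_left (by linarith [min_le_left y v, le_max_right x u])

lemma intervalOverlap_eq_sub {x y u v : ℝ} (hxy : x ≤ y) (huv : u ≤ v) :
    intervalOverlap x y u v = min y (max x v) - min y (max x u) := by
  simp only [intervalOverlap, min_def, max_def]
  split_ifs <;> linarith

/-- The summands are the increments of `t ↦ min y (max x t)` along `g`, so the sum telescopes. -/
lemma sum_intervalOverlap_of_monotone {g : ℕ → ℝ} (hg : Monotone g) {x y : ℝ} {n : ℕ}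
    (hxy : x ≤ y) (hx : g 0 ≤ x) (hy : y ≤ g n) :
    ∑ i ∈ range n, intervalOverlap x y (g i) (g (i + 1)) = y - x := by
  rw [sum_congr rfl fun i _ => intervalOverlap_eq_sub hxy (hg i.le_succ),
    sum_range_sub (fun i => min y (max x (g i))), max_eq_right (hxy.trans hy), min_eq_left hy,
    max_eq_left hx, min_eq_right hxy]

section
variable {N : ℕ}

def finCdf (κ : Fin N → ℝ) (n : ℕ) : ℝ := ∑ i with i.val < n, κ i

@[simp]
lemma finCdf_zero (κ : Fin N → ℝ) : finCdf κ 0 = 0 := by simp [finCdf]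

lemma finCdf_of_le (κ : Fin N → ℝ) {n : ℕ} (h : N ≤ n) : finCdf κ n = ∑ i, κ i := by
  rw [finCdf, filter_true_of_mem fun i _ => i.isLt.trans_le h]

lemma finCdf_val (κ : Fin N → ℝ) (a : Fin N) : finCdf κ a = ∑ i ∈ Iio a, κ i := by
  rw [finCdf]
  congr 1
  ext i
  simp

lemma finCdf_val_succ (κ : Fin N → ℝ) (a : Fin N) : finCdf κ (a + 1) = ∑ i ∈ Iic a, κ i := by
  rw [finCdf]
  congr 1
  ext i
  simp

lemma finCdf_succ (κ : Fin N → ℝ) (a : Fin N) : finCdf κ (a + 1) = finCdf κ a + κ a := by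
  rw [finCdf_val_succ, finCdf_val, sum_Iio_add_eq_sum_Iic]

lemma monotone_finCdf {κ : Fin N → ℝ} (hκ : ∀ i, 0 ≤ κ i) : Monotone (finCdf κ) := by
  intro m n hmn
  refine sum_le_sum_of_subset_of_nonneg (fun i => ?_) fun i _ _ => hκ i
  simp only [mem_filter, mem_univ, true_and]
  exact (·.trans_le hmn)

lemma finCdf_nonneg {κ : Fin N → ℝ} (hκ : ∀ i, 0 ≤ κ i) (n : ℕ) : 0 ≤ finCdf κ n :=
  finCdf_zero κ ▸ monotone_finCdf hκ n.zero_le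

lemma finCdf_le_finCdf {κ ι : Fin N → ℝ} (hdom : ∀ j, ∑ i ∈ Iic j, κ i ≤ ∑ i ∈ Iic j, ι i)
    (htot : ∑ i, κ i = ∑ i, ι i) (n : ℕ) : finCdf κ n ≤ finCdf ι n := by
  rcases n with _ | m
  · simp
  · by_cases hm : m < N
    · exact (finCdf_val_succ κ ⟨m, hm⟩).trans_le
        ((hdom ⟨m, hm⟩).trans_eq (finCdf_val_succ ι ⟨m, hm⟩).symm)
    · rw [finCdf_of_le κ (by omega), finCdf_of_le ι (by omega), htot]

def quantileCoupling (κ ι : Fin N → ℝ) (z : Fin N × Fin N) : ℝ :=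
  intervalOverlap (finCdf κ z.1) (finCdf κ (z.1 + 1)) (finCdf ι z.2) (finCdf ι (z.2 + 1))

lemma quantileCoupling_nonneg (κ ι : Fin N → ℝ) (z : Fin N × Fin N) :
    0 ≤ quantileCoupling κ ι z :=
  intervalOverlap_nonneg ..

lemma quantileCoupling_swap (κ ι : Fin N → ℝ) (a b : Fin N) :
    quantileCoupling κ ι (a, b) = quantileCoupling ι κ (b, a) :=
  intervalOverlap_comm ..

lemma sum_quantileCoupling_fst {κ ι : Fin N → ℝ} (hκ : ∀ i, 0 ≤ κ i) (hι : ∀ i, 0 ≤ ι i)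
    (htot : ∑ i, κ i = ∑ i, ι i) (a : Fin N) : ∑ b, quantileCoupling κ ι (a, b) = κ a := by
  have hend : finCdf κ (a + 1) ≤ finCdf ι N := by
    rw [finCdf_of_le ι le_rfl, ← htot, ← finCdf_of_le κ le_rfl]
    exact monotone_finCdf hκ a.isLt
  simp only [quantileCoupling]
  rw [Fin.sum_univ_eq_sum_range fun i => intervalOverlap (finCdf κ a) (finCdf κ (a + 1))
      (finCdf ι i) (finCdf ι (i + 1)),
    sum_intervalOverlap_of_monotone (monotone_finCdf hι) (monotone_finCdf hκ a.val.le_succ)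
      (by simpa using finCdf_nonneg hκ a) hend, finCdf_succ, add_sub_cancel_left]

lemma sum_quantileCoupling_snd {κ ι : Fin N → ℝ} (hκ : ∀ i, 0 ≤ κ i) (hι : ∀ i, 0 ≤ ι i)
    (htot : ∑ i, κ i = ∑ i, ι i) (b : Fin N) : ∑ a, quantileCoupling κ ι (a, b) = ι b := by
  simp only [quantileCoupling_swap κ ι _ b]
  exact sum_quantileCoupling_fst hι hκ htot.symm b

lemma quantileCoupling_eq_zero_of_lt {κ ι : Fin N → ℝ} (hι : ∀ i, 0 ≤ ι i)
    (hdom : ∀ n, finCdf κ n ≤ finCdf ι n) {a b : Fin N} (hab : a < b) :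
    quantileCoupling κ ι (a, b) = 0 :=
  intervalOverlap_eq_zero_of_le ((hdom _).trans (monotone_finCdf hι (Nat.succ_le_of_lt hab)))

end

lemma sum_Iic_le_sum_Iic_of_coupling {α : Type*} [Fintype α] [Preorder α]
    [LocallyFiniteOrderBot α] {κ ι : α → ℝ} {γ : α × α → ℝ} (hγ : ∀ z, 0 ≤ γ z)
    (hκ : ∀ a, ∑ b, γ (a, b) = κ a) (hι : ∀ b, ∑ a, γ (a, b) = ι b) (hsupp : ∀ a b, γ (a, b) ≠ 0 → b ≤ a) (j : α) :
    ∑ i ∈ Iic j, κ i ≤ ∑ i ∈ Iic j, ι i := by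
  have hrow : ∀ a ∈ Iic j, κ a = ∑ b ∈ Iic j, γ (a, b) := fun a ha => by
    rw [← hκ a]
    refine (sum_subset (subset_univ _) fun b _ hb => ?_).symm
    by_contra hne
    exact hb (mem_Iic.2 ((hsupp a b hne).trans (mem_Iic.1 ha)))
  calc ∑ a ∈ Iic j, κ a = ∑ b ∈ Iic j, ∑ a ∈ Iic j, γ (a, b) := by
        rw [sum_congr rfl hrow, sum_comm]
    _ ≤ ∑ b ∈ Iic j, ∑ a, γ (a, b) :=
        sum_le_sum fun b _ =>
          sum_le_sum_of_subset_of_nonneg (subset_univ _) fun a _ _ => hγ (a, b)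
    _ = ∑ b ∈ Iic j, ι b := sum_congr rfl fun b _ => hι b

/-- Strassen's theorem, finite totally ordered case: κ stochastically
dominates ι iff there is a monotone coupling of κ and ι. Probability measures on
`Fin N` are represented as nonnegative real mass functions summing to 1. -/
theorem stmt7 (N : ℕ) (κ ι : Fin N → ℝ)
    (hκ0 : ∀ i, 0 ≤ κ i) (hκ1 : ∑ i, κ i = 1)
    (hι0 : ∀ i, 0 ≤ ι i) (hι1 : ∑ i, ι i = 1) :
    (∀ j : Fin N, ∑ i ∈ Finset.Iic j, κ i ≤ ∑ i ∈ Finset.Iic j, ι i) ↔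
      ∃ γ : Fin N × Fin N → ℝ,
        (∀ z, 0 ≤ γ z) ∧
        (∀ a : Fin N, ∑ b : Fin N, γ (a, b) = κ a) ∧
        (∀ b : Fin N, ∑ a : Fin N, γ (a, b) = ι b) ∧
        (∀ a b : Fin N, γ (a, b) ≠ 0 → b ≤ a) := by
  have htot : ∑ i, κ i = ∑ i, ι i := hκ1.trans hι1.symm
  constructor
  · intro hdom
    have hcdf := finCdf_le_finCdf hdom htot
    exact ⟨quantileCoupling κ ι, quantileCoupling_nonneg κ ι,
      sum_quantileCoupling_fst hκ0 hι0 htot, sum_quantileCoupling_snd hκ0 hι0 htot,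
      fun a b hne => not_lt.1 fun hab => hne (quantileCoupling_eq_zero_of_lt hι0 hcdf hab)⟩
  · rintro ⟨γ, hγ, hγκ, hγι, hsupp⟩
    exact sum_Iic_le_sum_Iic_of_coupling hγ hγκ hγι hsupp
end

section
/- Let X = (X_g)_{g∈F} be i.i.d. Bernoulli(1/2) random variables indexed by the free group F of rank 2 with generators a, b. Define φ(X)(g) = (X(g) ⊕ X(ga), X(g) ⊕ X(gb)) for each g ∈ F. Then (φ(X)(g))_{g∈F} is an i.i.d. family of random variables each uniformly distributed on {0,1}², i.e., φ pushes the product measure (1/2,1/2)^F forward to the product measure (1/4,1/4,1/4,1/4)^F. -/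
/-!
The increments `X (g * of i) - X g` sit on the edges of the Cayley graph of the free group, which
is a tree. Any nonempty finite set of edges has a vertex `t` lying on exactly one of them: take `t`
of maximal word length among their endpoints, since only one neighbour of `t` is shorter. On that
edge the increment is `X t` shifted by a function of the other coordinates, so by independence it
is uniform and independent of the increments on the remaining edges. By induction, increments on
any finite set of edges are i.i.d. uniform, and `φ(X)(g)` is the pair of increments on the two
edges leaving `g` (in `Fin 2`, `x + y = y - x`).
-/

open MeasureTheory ProbabilityTheory
open scoped ENNReal

/-- Edge `e` joins `src e` to `tgt e`; these are exactly the multigraphs without cycles. -/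
structure IsForest {ι V : Type*} (src tgt : ι → V) : Prop where
  src_ne_tgt : ∀ e, src e ≠ tgt e
  exists_pendant : ∀ C : Finset ι, C.Nonempty → ∃ e ∈ C, ∃ t, (t = src e ∨ t = tgt e) ∧
    ∀ e' ∈ C, (t = src e' ∨ t = tgt e') → e' = e

namespace FreeGroup

variable {α : Type*}

section Reduced

variable [DecidableEq α]

theorem toWord_mul_mk_singleton {t : FreeGroup α} {x : α × Bool}
    (h : t.toWord.getLast? ≠ some (x.1, !x.2)) : (t * mk [x]).toWord = t.toWord ++ [x] := by
  rw [toWord_mul, toWord_mk, IsReduced.singleton.reduce_eq]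
  refine IsReduced.reduce_eq (List.isChain_append.2 ⟨isReduced_toWord, IsReduced.singleton, ?_⟩)
  rintro y hy z hz hyz
  obtain rfl : z = x := by simpa [eq_comm] using hz
  by_contra hne
  exact h (by rw [hy]; exact congrArg some (Prod.ext hyz (Bool.eq_not_of_ne hne)))

theorem getLast?_toWord_of_norm_mul_mk_singleton_le {t : FreeGroup α} {x : α × Bool}
    (h : norm (t * mk [x]) ≤ norm t) : t.toWord.getLast? = some (x.1, !x.2) := by
  by_contra hne
  rw [norm, toWord_mul_mk_singleton hne, List.length_append] at h
  simp [norm] at h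

end Reduced

theorem mk_singleton_false (a : α) : mk [(a, false)] = (of a)⁻¹ := by
  rw [of, inv_mk]; rfl

theorem exists_letter_of_mem_edge {t : FreeGroup α} {e : FreeGroup α × α}
    (h : t = e.1 ∨ t = e.1 * of e.2) :
    ∃ b : Bool, (t * mk [(e.2, b)] = e.1 ∨ t * mk [(e.2, b)] = e.1 * of e.2) ∧
      e.1 = if b then t else t * mk [(e.2, b)] := by
  rcases h with rfl | rfl
  · exact ⟨true, Or.inr rfl, rfl⟩
  · refine ⟨false, Or.inl ?_, ?_⟩ <;> simp [mk_singleton_false]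

theorem isForest_cayley : IsForest (fun e : FreeGroup α × α => e.1) fun e => e.1 * of e.2 := by
  classical
  refine ⟨fun e => by simp, fun C hC => ?_⟩
  let V := C.image Prod.fst ∪ C.image fun e => e.1 * of e.2
  obtain ⟨t, htV, hmax⟩ :=
    V.exists_max_image norm ((hC.image _).mono Finset.subset_union_left)
  have hlast : ∀ e ∈ C, (t = e.1 ∨ t = e.1 * of e.2) → ∃ b,
      t.toWord.getLast? = some (e.2, !b) ∧ e.1 = if b then t else t * mk [(e.2, b)] := by
    intro e he hte
    obtain ⟨b, hnb, he1⟩ := exists_letter_of_mem_edge hte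
    refine ⟨b, getLast?_toWord_of_norm_mul_mk_singleton_le (x := (e.2, b)) (hmax _ ?_), he1⟩
    rcases hnb with h | h <;> rw [h] <;> simp only [V, Finset.mem_union, Finset.mem_image]
    exacts [Or.inl ⟨e, he, rfl⟩, Or.inr ⟨e, he, rfl⟩]
  obtain ⟨e, he, hte⟩ : ∃ e ∈ C, t = e.1 ∨ t = e.1 * of e.2 := by
    simp only [V, Finset.mem_union, Finset.mem_image] at htV
    rcases htV with ⟨e, he, rfl⟩ | ⟨e, he, rfl⟩
    exacts [⟨e, he, Or.inl rfl⟩, ⟨e, he, Or.inr rfl⟩]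
  refine ⟨e, he, t, hte, fun e' he' hte' => ?_⟩
  obtain ⟨b, hb, he1⟩ := hlast e he hte
  obtain ⟨b', hb', he1'⟩ := hlast e' he' hte'
  obtain ⟨h2, hbb⟩ : e'.2 = e.2 ∧ b' = b := by simpa using hb'.symm.trans hb
  exact Prod.ext (by rw [he1, he1', h2, hbb]) h2

end FreeGroup

section

variable {Ω G : Type*} {mΩ : MeasurableSpace Ω} {μ : Measure Ω}

theorem sum_measure_inter_preimage_singleton [Fintype G] {W : Ω → G}
    (hW : ∀ a, MeasurableSet (W ⁻¹' {a})) (s : Set Ω) :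
    ∑ a, μ (s ∩ W ⁻¹' {a}) = μ s := by
  simpa [Measure.restrict_apply (hW _), Set.inter_comm] using
    sum_measure_preimage_singleton (μ := μ.restrict s) Finset.univ fun a _ => hW a

theorem measure_inter_setOf_eq_of_indep [Fintype G] [MeasurableSpace G]
    [MeasurableSingletonClass G] {m : MeasurableSpace Ω} (hm : m ≤ mΩ) {Z W : Ω → G} {B : Set Ω}
    {r : ℝ≥0∞} (hind : Indep m (MeasurableSpace.comap Z ‹_›) μ) (hB : MeasurableSet[m] B)
    (hW : Measurable[m] W) (hZ : ∀ a, μ (Z ⁻¹' {a}) = r) :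
    μ (B ∩ {ω | Z ω = W ω}) = r * μ B := by
  have hWa (a : G) : MeasurableSet[m] (W ⁻¹' {a}) := hW (measurableSet_singleton a)
  calc μ (B ∩ {ω | Z ω = W ω})
      = ∑ a, μ (B ∩ {ω | Z ω = W ω} ∩ W ⁻¹' {a}) :=
        (sum_measure_inter_preimage_singleton (fun a => hm _ (hWa a)) _).symm
    _ = ∑ a, μ (B ∩ W ⁻¹' {a} ∩ Z ⁻¹' {a}) := by
        congr! 2 with a
        ext ω
        simp only [Set.mem_inter_iff, Set.mem_preimage, Set.mem_singleton_iff]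
        grind
    _ = ∑ a, μ (B ∩ W ⁻¹' {a}) * r := by
        congr! 1 with a
        rw [(Indep_iff _ _ μ).1 hind _ _ (hB.inter (hWa a)) ⟨{a}, measurableSet_singleton a, rfl⟩,
          hZ]
    _ = r * μ B := by
        rw [← Finset.sum_mul, sum_measure_inter_preimage_singleton (fun a => hm _ (hWa a)),
          mul_comm]

section Increments

variable [MeasurableSpace G] {V : Type*} {X : V → Ω → G}

theorem measurable_iSup_comap {T : Set V} {v : V} (hv : v ∈ T) :
    Measurable[⨆ u ∈ T, MeasurableSpace.comap (X u) ‹_›] (X v) :=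
  Measurable.of_comap_le
    (le_iSup₂ (f := fun u (_ : u ∈ T) => MeasurableSpace.comap (X u) ‹_›) v hv)

theorem measurableSet_iSup_comap_sub_eq [AddGroup G] [Countable G] [MeasurableSingletonClass G]
    {T : Set V} {u v : V} (hu : u ∈ T) (hv : v ∈ T) (c : G) :
    MeasurableSet[⨆ u ∈ T, MeasurableSpace.comap (X u) ‹_›] {ω | X u ω - X v ω = c} :=
  (measurable_of_countable (fun p : G × G => p.1 - p.2)).comp
    ((measurable_iSup_comap hu).prodMk (measurable_iSup_comap hv)) (measurableSet_singleton c)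

theorem measure_inter_setOf_eq_of_iIndepFun [Fintype G] [MeasurableSingletonClass G]
    (hXm : ∀ v, Measurable (X v)) (hXi : iIndepFun X μ) {t : V} {r : ℝ≥0∞}
    (hXt : ∀ a, μ (X t ⁻¹' {a}) = r) {B : Set Ω}
    (hB : MeasurableSet[⨆ v ∈ ({t}ᶜ : Set V), MeasurableSpace.comap (X v) ‹_›] B) {W : Ω → G}
    (hW : Measurable[⨆ v ∈ ({t}ᶜ : Set V), MeasurableSpace.comap (X v) ‹_›] W) :
    μ (B ∩ {ω | X t ω = W ω}) = r * μ B := by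
  refine measure_inter_setOf_eq_of_indep (iSup₂_le fun v _ => (hXm v).comap_le) ?_ hB hW hXt
  simpa only [iSup_singleton] using indep_iSup_of_disjoint (fun v => (hXm v).comap_le)
    ((iIndepFun_iff_iIndep _ _ _).1 hXi) (disjoint_compl_left (a := ({t} : Set V)))

theorem measure_biInter_sub_eq_pow [IsProbabilityMeasure μ] [AddGroup G] [Fintype G]
    [MeasurableSingletonClass G] (hXm : ∀ v, Measurable (X v)) (hXi : iIndepFun X μ)
    {r : ℝ≥0∞} (hXd : ∀ v a, μ (X v ⁻¹' {a}) = r) {ι : Type*} {src tgt : ι → V}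
    (hforest : IsForest src tgt) (c : ι → G) (C : Finset ι) :
    μ (⋂ e ∈ C, {ω | X (tgt e) ω - X (src e) ω = c e}) = r ^ C.card := by
  classical
  induction C using Finset.strongInduction with
  | H C ih =>
  rcases C.eq_empty_or_nonempty with rfl | hC
  · simp
  obtain ⟨e₀, he₀, t, ht, huniq⟩ := hforest.exists_pendant C hC
  have hne := hforest.src_ne_tgt e₀
  let m := ⨆ v ∈ ({t}ᶜ : Set V), MeasurableSpace.comap (X v) ‹_›
  obtain ⟨W, hW, hE⟩ : ∃ W : Ω → G, Measurable[m] W ∧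
      {ω | X (tgt e₀) ω - X (src e₀) ω = c e₀} = {ω | X t ω = W ω} := by
    rcases ht with rfl | rfl
    · refine ⟨fun ω => -c e₀ + X (tgt e₀) ω,
        (measurable_of_countable _).comp (measurable_iSup_comap hne.symm), ?_⟩
      ext ω
      simp only [Set.mem_ofPred_eq]
      rw [sub_eq_iff_eq_add, eq_neg_add_iff_add_eq, eq_comm]
    · refine ⟨fun ω => c e₀ + X (src e₀) ω,
        (measurable_of_countable _).comp (measurable_iSup_comap hne), ?_⟩
      ext ω
      simp only [Set.mem_ofPred_eq]
      rw [sub_eq_iff_eq_add]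
  have hB : MeasurableSet[m] (⋂ e ∈ C.erase e₀, {ω | X (tgt e) ω - X (src e) ω = c e}) := by
    refine Finset.measurableSet_biInter _ fun e he => measurableSet_iSup_comap_sub_eq ?_ ?_ _ <;>
    · intro h
      exact Finset.ne_of_mem_erase he (huniq e (Finset.mem_of_mem_erase he) (by simp_all))
  rw [← Finset.insert_erase he₀, Finset.set_biInter_insert, Set.inter_comm, hE,
    measure_inter_setOf_eq_of_iIndepFun hXm hXi (hXd t) hB hW, ih _ (Finset.erase_ssubset he₀),
    Finset.card_insert_of_notMem (Finset.notMem_erase _ _), pow_succ']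

end Increments

theorem iIndepFun_of_measure_biInter_preimage_singleton [IsProbabilityMeasure μ] {ι β : Type*}
    [MeasurableSpace β] [Countable β] [MeasurableSingletonClass β] [Nonempty β]
    {Y : ι → Ω → β} (hY : ∀ i, Measurable (Y i))
    (h : ∀ (s : Finset ι) (c : ι → β),
      μ (⋂ i ∈ s, Y i ⁻¹' {c i}) = ∏ i ∈ s, μ (Y i ⁻¹' {c i})) :
    iIndepFun Y μ := by
  classical
  refine iIndepFun_iff_finset.2 fun s => ?_
  refine (iIndepFun_iff_map_fun_eq_pi_map (f := s.restrict Y) fun i => (hY i).aemeasurable).2 ?_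
  refine Measure.ext_of_singleton fun q => ?_
  let c : ι → β := Function.extend Subtype.val q fun _ => Classical.arbitrary β
  have hc (i : s) : c i = q i := Subtype.val_injective.extend_apply _ _ i
  rw [Measure.pi_singleton, Measure.map_apply
    (measurable_pi_lambda (fun ω (i : s) => s.restrict Y i ω) fun i => hY i)
    (measurableSet_singleton q)]
  have hmap (i : s) : μ.map (s.restrict Y i) {q i} = μ (Y i ⁻¹' {c i}) := by
    rw [Finset.restrict, Measure.map_apply (hY i) (measurableSet_singleton _), hc]
  rw [Finset.prod_congr rfl fun i _ => hmap i, Finset.prod_coe_sort s fun i => μ (Y i ⁻¹' {c i}),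
    ← h s c]
  congr 1
  ext ω
  simp only [Set.mem_preimage, Set.mem_singleton_iff, funext_iff, Set.mem_iInter]
  exact Subtype.forall.trans (forall₂_congr fun i hi => by rw [← hc ⟨i, hi⟩]; rfl)

theorem measure_biInter_setOf_increments_eq [IsProbabilityMeasure μ]
    {X : FreeGroup (Fin 2) → Ω → Fin 2} (hXm : ∀ g, Measurable (X g)) (hXi : iIndepFun X μ)
    (hXd : ∀ g a, μ (X g ⁻¹' {a}) = 1 / 2) (s : Finset (FreeGroup (Fin 2)))
    (c : FreeGroup (Fin 2) → Fin 2 × Fin 2) :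
    μ (⋂ g ∈ s, {ω | (X g ω + X (g * FreeGroup.of 0) ω, X g ω + X (g * FreeGroup.of 1) ω) = c g})
      = (1 / 4) ^ s.card := by
  have hset : ⋂ g ∈ s, {ω | (X g ω + X (g * FreeGroup.of 0) ω,
        X g ω + X (g * FreeGroup.of 1) ω) = c g} = ⋂ e ∈ s ×ˢ Finset.univ,
      {ω | X (e.1 * FreeGroup.of e.2) ω - X e.1 ω = ![(c e.1).1, (c e.1).2] e.2} := by
    have hsub : ∀ x y z : Fin 2, x + y = z ↔ y - x = z := by decide
    ext ω
    simp [Prod.ext_iff, Fin.forall_fin_two, hsub, imp_and, forall_and]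
  have hquarter : (1 / 2 : ℝ≥0∞) ^ 2 = 1 / 4 := by
    rw [one_div, one_div, ← ENNReal.inv_pow]
    norm_num
  rw [hset, measure_biInter_sub_eq_pow hXm hXi hXd FreeGroup.isForest_cayley,
    Finset.card_product, Finset.card_univ, Fintype.card_fin, pow_mul', hquarter]

end

/-- Ornstein–Weiss: if `(X_g)` are i.i.d. Bernoulli(1/2) indexed by the
free group F on two generators a, b, then the family
`φ(X)(g) = (X(g) ⊕ X(ga), X(g) ⊕ X(gb))` is i.i.d. uniform on {0,1}²: the variables
indexed by the group elements are jointly independent and each is uniform on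
`Fin 2 × Fin 2`. -/
theorem stmt13 {Ω : Type*} [MeasurableSpace Ω] (μ : Measure Ω) [IsProbabilityMeasure μ]
    (X : FreeGroup (Fin 2) → Ω → Fin 2) (hXm : ∀ g, Measurable (X g))
    (hXi : iIndepFun X μ)
    (hXd : ∀ (g : FreeGroup (Fin 2)) (a : Fin 2), μ {ω | X g ω = a} = 1/2)
    (a b : FreeGroup (Fin 2)) (ha : a = FreeGroup.of 0) (hb : b = FreeGroup.of 1)
    (Y : FreeGroup (Fin 2) → Ω → Fin 2 × Fin 2)
    (hY : Y = fun g ω => (X g ω + X (g * a) ω, X g ω + X (g * b) ω)) :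
    iIndepFun Y μ ∧
    ∀ (g : FreeGroup (Fin 2)) (c : Fin 2 × Fin 2), μ {ω | Y g ω = c} = 1/4 := by
  subst ha hb hY
  have hmarg (g : FreeGroup (Fin 2)) (c : Fin 2 × Fin 2) :
      μ {ω | (X g ω + X (g * FreeGroup.of 0) ω, X g ω + X (g * FreeGroup.of 1) ω) = c} = 1 / 4 := by
    simpa using measure_biInter_setOf_increments_eq hXm hXi hXd {g} fun _ => c
  refine ⟨iIndepFun_of_measure_biInter_preimage_singleton (fun g => by fun_prop)
    fun s c => ?_, hmarg⟩
  calc _ = (1 / 4 : ℝ≥0∞) ^ s.card := measure_biInter_setOf_increments_eq hXm hXi hXd s c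
    _ = _ := by
      rw [← Finset.prod_const]
      exact Finset.prod_congr rfl fun g _ => (hmarg g (c g)).symm
end
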